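/- arXiv:math/0504023 — 4 statements merged into one kernel-verified Lean document; each statement's English description precedes it below -/
import Mathlib

section
/- Let k be a field of characteristic 2, R a k-algebra, and r, s ∈ R. Let A = R[x,y] and let δ = f·∂/∂x + g·∂/∂y where f, g ∈ R[x,y]. With respect to the basis 1, x, y, xy of A as a free module over A' = R[x²,y²], assuming f, g ∈ A', the cokernel of δ : A → A is isomorphic as an A'-module to (A'/(f,g)A') ⊕ (A'^⊕2/(f,g)·A') ⊕ A', where (f,g)·A' denotes the image of the map A' → A'^⊕2, h ↦ (fh, gh). -/
/-!
In characteristic 2 the partial derivatives kill the squares `x², y²`, hence all of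
`A' = R[x², y²]`, so in the basis `1, y, x, xy` of `A` over `A'` the operator `δ` has the matrix
`(a, b, c, d) ↦ (g b + f c, f d, g d, 0)`. Its cokernel is therefore the product of
`A' / (f, g)`, `A'² / (f, g) A'` and `A'`. That `1, y, x, xy` is a basis comes from the grading
of `A` by the parities of the exponents, in which `A'` lies in degree `0`.
-/

set_option synthInstance.maxHeartbeats 1000000
set_option maxHeartbeats 2000000
open MvPolynomial

theorem Derivation.map_eq_zero_of_mem_adjoin_isSquare {R A M : Type*} [CommSemiring R]
    [CommSemiring A] [Algebra R A] [AddCommMonoid M] [Module A M] [Module R M]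
    [IsScalarTower R A M] (D : Derivation R A M) (h2 : (2 : A) = 0) {S : Set A}
    (hS : ∀ s ∈ S, IsSquare s) {a : A} (ha : a ∈ Algebra.adjoin R S) : D a = 0 := by
  refine D.eqOn_adjoin (D2 := 0) (fun s hs => ?_) ha
  obtain ⟨r, rfl⟩ := hS s hs
  rw [Derivation.leibniz, ← two_smul A, h2, zero_smul, Derivation.zero_apply]

namespace MvPolynomial

section WeightedHomogeneous

variable {σ R M : Type*} [CommSemiring R] [AddCommMonoid M] {w : σ → M}

theorem isWeightedHomogeneous_zero_of_mem_adjoin {S : Set (MvPolynomial σ R)}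
    (hS : ∀ s ∈ S, IsWeightedHomogeneous w s 0) {p : MvPolynomial σ R}
    (hp : p ∈ Algebra.adjoin R S) : IsWeightedHomogeneous w p 0 :=
  Algebra.adjoin_induction hS (fun r => isWeightedHomogeneous_C w r)
    (fun _ _ _ _ hx hy => hx.add hy) (fun _ _ _ _ hx hy => by simpa using hx.mul hy) hp

theorem IsWeightedHomogeneous.eq_zero_of_sum_eq_zero {ι : Type*} {s : Finset ι}
    {p : ι → MvPolynomial σ R} {d : ι → M} (hd : Set.InjOn d s)
    (hp : ∀ i ∈ s, IsWeightedHomogeneous w (p i) (d i)) (hsum : ∑ i ∈ s, p i = 0)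
    {i : ι} (hi : i ∈ s) : p i = 0 := by
  have := congrArg (weightedHomogeneousComponent w (d i)) hsum
  rwa [map_sum, Finset.sum_eq_single_of_mem i hi, (hp i hi).weightedHomogeneousComponent_same,
    map_zero] at this
  intro j hj hji
  exact (hp j hj).weightedHomogeneousComponent_ne _ fun h => hji (hd hj hi h.symm)

end WeightedHomogeneous

/-- Weights for the grading of `MvPolynomial σ R` by the parity vector of the exponents. -/
def parityWeight (σ : Type*) [DecidableEq σ] : σ → σ → ZMod 2 := fun i => Pi.single i 1

theorem isWeightedHomogeneous_X_sq {σ R : Type*} [CommSemiring R] [DecidableEq σ] (i : σ) :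
    IsWeightedHomogeneous (parityWeight σ) (X i ^ 2 : MvPolynomial σ R) 0 := by
  simpa [show (2 : σ → ZMod 2) = 0 by ext; rfl] using
    (isWeightedHomogeneous_X R (parityWeight σ) i).pow 2

end MvPolynomial

section DerivationMatrix

variable {A : Type*} [CommRing A] (F G : A)

noncomputable def derivationMatrix : A × (A × A) × A →ₗ[A] A × (A × A) × A where
  toFun v := (G * v.2.1.1 + F * v.2.1.2, (F * v.2.2, G * v.2.2), 0)
  map_add' u v := by ext <;> simp only [Prod.fst_add, Prod.snd_add] <;> ring
  map_smul' r v := by ext <;> simp [smul_eq_mul] <;> ring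

theorem derivationMatrix_apply (a b c d : A) :
    derivationMatrix F G (a, (b, c), d) = (G * b + F * c, (F * d, G * d), 0) := rfl

theorem range_derivationMatrix :
    LinearMap.range (derivationMatrix F G) = (Submodule.span A {F, G}).prod
      ((LinearMap.range
        ((F • (LinearMap.id : A →ₗ[A] A)).prod (G • (LinearMap.id : A →ₗ[A] A)))).prod ⊥) := by
  ext ⟨u, ⟨v, w⟩, z⟩
  simp only [LinearMap.mem_range, Submodule.mem_prod, Submodule.mem_span_pair, Submodule.mem_bot,
    LinearMap.prod_apply, smul_eq_mul, Prod.ext_iff, Prod.exists, derivationMatrix_apply]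
  constructor
  · rintro ⟨-, b, c, d, h1, ⟨h2, h3⟩, h4⟩
    exact ⟨⟨c, b, by rw [← h1]; ring⟩, ⟨d, h2, h3⟩, h4.symm⟩
  · rintro ⟨⟨c, b, h1⟩, ⟨d, h2, h3⟩, h4⟩
    exact ⟨0, b, c, d, by rw [← h1]; ring, ⟨h2, h3⟩, h4.symm⟩

end DerivationMatrix

section EvenCoordinates

variable {R : Type*} [CommRing R] (A' : Subalgebra R (MvPolynomial (Fin 2) R))

/-- Coordinates in the order `1, y, x, xy`: since `δ (d x y) = g d x + f d y`, this order makes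
the middle block of the matrix of `δ` the map `d ↦ (f d, g d)`. -/
noncomputable def ofEvenCoords : A' × (A' × A') × A' →ₗ[A'] MvPolynomial (Fin 2) R :=
  LinearMap.coprod (LinearMap.toSpanSingleton A' _ 1)
    (LinearMap.coprod
      (LinearMap.coprod (LinearMap.toSpanSingleton A' _ (X 1))
        (LinearMap.toSpanSingleton A' _ (X 0)))
      (LinearMap.toSpanSingleton A' _ (X 0 * X 1)))

theorem ofEvenCoords_apply (a b c d : A') :
    ofEvenCoords A' (a, (b, c), d) =
      (a : MvPolynomial (Fin 2) R) + (b : MvPolynomial (Fin 2) R) * X 1 +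
        (c : MvPolynomial (Fin 2) R) * X 0 + (d : MvPolynomial (Fin 2) R) * (X 0 * X 1) := by
  simp only [ofEvenCoords, LinearMap.coprod_apply, LinearMap.toSpanSingleton_apply,
    Subalgebra.smul_def, smul_eq_mul, mul_one]
  ring

variable {A'}

theorem ofEvenCoords_injective
    (hA' : ∀ a ∈ A', IsWeightedHomogeneous (parityWeight (Fin 2)) a 0) :
    Function.Injective (ofEvenCoords A') := by
  rw [← LinearMap.ker_eq_bot, LinearMap.ker_eq_bot']
  rintro ⟨a, ⟨b, c⟩, d⟩ h0
  rw [ofEvenCoords_apply] at h0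
  set w := parityWeight (Fin 2)
  have hcomp := fun i => IsWeightedHomogeneous.eq_zero_of_sum_eq_zero (s := Finset.univ)
    (p := ![(a : MvPolynomial (Fin 2) R), (b : MvPolynomial (Fin 2) R) * X 1,
      (c : MvPolynomial (Fin 2) R) * X 0, (d : MvPolynomial (Fin 2) R) * (X 0 * X 1)])
    (d := ![0, w 1, w 0, w 0 + w 1]) (by rw [Finset.coe_univ, Set.injOn_univ]; decide)
    (fun i _ => by
      fin_cases i
      · exact hA' a a.2
      · simpa using (hA' b b.2).mul (isWeightedHomogeneous_X R w 1)
      · simpa using (hA' c c.2).mul (isWeightedHomogeneous_X R w 0)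
      · simpa using (hA' d d.2).mul
          ((isWeightedHomogeneous_X R w 0).mul (isWeightedHomogeneous_X R w 1)))
    (by simpa [Fin.sum_univ_four] using h0) (Finset.mem_univ i)
  have ha := hcomp 0
  have hb := hcomp 1
  have hc := hcomp 2
  have hd := hcomp 3
  simp only [Matrix.cons_val, (isRegular_X).right.mul_right_eq_zero_iff,
    (isRegular_X.mul isRegular_X).right.mul_right_eq_zero_iff, ZeroMemClass.coe_eq_zero]
    at ha hb hc hd
  simp [ha, hb, hc, hd]

theorem ofEvenCoords_surjective (hx : (X 0 : MvPolynomial (Fin 2) R) ^ 2 ∈ A')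
    (hy : (X 1 : MvPolynomial (Fin 2) R) ^ 2 ∈ A') : Function.Surjective (ofEvenCoords A') := by
  intro p
  induction p using MvPolynomial.induction_on with
  | C r => exact ⟨(algebraMap R A' r, (0, 0), 0), by simp [ofEvenCoords_apply]⟩
  | add p q hp hq =>
    obtain ⟨u, rfl⟩ := hp
    obtain ⟨v, rfl⟩ := hq
    exact ⟨u + v, map_add _ u v⟩
  | mul_X p i hp =>
    obtain ⟨⟨a, ⟨b, c⟩, d⟩, rfl⟩ := hp
    fin_cases i
    · refine ⟨(c * ⟨_, hx⟩, (d * ⟨_, hx⟩, a), b), ?_⟩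
      simp only [ofEvenCoords_apply, Subalgebra.coe_mul, Fin.zero_eta]
      ring
    · refine ⟨(b * ⟨_, hy⟩, (a, d * ⟨_, hy⟩), c), ?_⟩
      simp only [ofEvenCoords_apply, Subalgebra.coe_mul, Fin.mk_one]
      ring

theorem ofEvenCoords_bijective
    (hA' : A' = Algebra.adjoin R {(X 0 : MvPolynomial (Fin 2) R) ^ 2, X 1 ^ 2}) :
    Function.Bijective (ofEvenCoords A') := by
  subst hA'
  refine ⟨ofEvenCoords_injective fun a ha => ?_,
    ofEvenCoords_surjective (Algebra.subset_adjoin (by simp))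
      (Algebra.subset_adjoin (by simp))⟩
  refine isWeightedHomogeneous_zero_of_mem_adjoin (fun s hs => ?_) ha
  rcases hs with rfl | rfl <;> exact isWeightedHomogeneous_X_sq _

theorem comp_ofEvenCoords {f g : MvPolynomial (Fin 2) R} (hf : f ∈ A') (hg : g ∈ A')
    (hA' : ∀ a ∈ A', ∀ i, pderiv i (a : MvPolynomial (Fin 2) R) = 0)
    (δ : MvPolynomial (Fin 2) R →ₗ[A'] MvPolynomial (Fin 2) R)
    (hδ : ∀ p, δ p = f * pderiv 0 p + g * pderiv 1 p) :
    δ ∘ₗ ofEvenCoords A' = ofEvenCoords A' ∘ₗ derivationMatrix ⟨f, hf⟩ ⟨g, hg⟩ := by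
  refine LinearMap.ext fun ⟨a, ⟨b, c⟩, d⟩ => ?_
  simp only [LinearMap.comp_apply, derivationMatrix_apply, ofEvenCoords_apply, hδ, map_add,
    Derivation.leibniz, pderiv_X, hA' _ a.2, hA' _ b.2, hA' _ c.2, hA' _ d.2, Pi.single_apply,
    smul_eq_mul, Subalgebra.coe_add, Subalgebra.coe_mul, Subalgebra.coe_zero, Fin.isValue,
    one_ne_zero, zero_ne_one, ↓reduceIte, mul_zero, add_zero, mul_one, zero_add, zero_mul]
  ring

end EvenCoordinates

noncomputable def Submodule.quotientProdEquiv {A M N : Type*} [Ring A] [AddCommGroup M]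
    [AddCommGroup N] [Module A M] [Module A N] (p : Submodule A M) (q : Submodule A N) :
    ((M × N) ⧸ p.prod q) ≃ₗ[A] (M ⧸ p) × (N ⧸ q) :=
  (Submodule.quotEquivOfEq _ _ (by rw [LinearMap.ker_prodMap, ker_mkQ, ker_mkQ])).trans
    ((p.mkQ.prodMap q.mkQ).quotKerEquivOfSurjective
      (Prod.map_surjective.mpr ⟨p.mkQ_surjective, q.mkQ_surjective⟩))

noncomputable def quotientRangeDerivationMatrixEquiv {A : Type*} [CommRing A] (F G : A) :
    ((A × (A × A) × A) ⧸ LinearMap.range (derivationMatrix F G)) ≃ₗ[A]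
      (A ⧸ Submodule.span A {F, G}) ×
        ((A × A) ⧸ LinearMap.range
          ((F • (LinearMap.id : A →ₗ[A] A)).prod (G • (LinearMap.id : A →ₗ[A] A)))) × A :=
  Submodule.quotEquivOfEq _ _ (range_derivationMatrix F G) ≪≫ₗ
    Submodule.quotientProdEquiv _ _ ≪≫ₗ
      (LinearEquiv.refl A _).prodCongr (Submodule.quotientProdEquiv _ _ ≪≫ₗ
        (LinearEquiv.refl A _).prodCongr (Submodule.quotEquivOfEqBot (⊥ : Submodule A A) rfl))

/-- Let `A = R[x,y]` in characteristic 2 and `A' = R[x²,y²]`, over which `A` is free with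
basis `1, x, y, xy`.  For `f, g ∈ A'`, the `A'`-linear operator `δ = f·∂/∂x + g·∂/∂y`
on `A` has cokernel isomorphic, as an `A'`-module, to
`(A'/(f,g)) ⊕ (A'^⊕2/(f,g)A') ⊕ A'`, where `(f,g)A'` is the image of `h ↦ (fh, gh)`. -/
theorem stmt4 (k : Type*) [Field k] [CharP k 2]
    (R : Type*) [CommRing R] [Algebra k R]
    (f g : MvPolynomial (Fin 2) R)
    (A' : Subalgebra R (MvPolynomial (Fin 2) R))
    (hA' : A' = Algebra.adjoin R {(X 0 : MvPolynomial (Fin 2) R) ^ 2, (X 1) ^ 2})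
    (hf : f ∈ A') (hg : g ∈ A')
    (δ : MvPolynomial (Fin 2) R →ₗ[A'] MvPolynomial (Fin 2) R)
    (hδ : ∀ p : MvPolynomial (Fin 2) R,
      δ p = f * (pderiv 0) p + g * (pderiv 1) p) :
    Nonempty (((MvPolynomial (Fin 2) R) ⧸ LinearMap.range δ) ≃ₗ[A']
      ((A' ⧸ Submodule.span A' ({⟨f, hf⟩, ⟨g, hg⟩} : Set A')) ×
       ((A' × A') ⧸ LinearMap.range
          (LinearMap.prod ((⟨f, hf⟩ : A') • (LinearMap.id : A' →ₗ[A'] A'))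
            ((⟨g, hg⟩ : A') • (LinearMap.id : A' →ₗ[A'] A'))) ) ×
       A')) := by
  have h2 : (2 : MvPolynomial (Fin 2) R) = 0 :=
    calc (2 : MvPolynomial (Fin 2) R) = algebraMap k _ 2 := (map_ofNat _ 2).symm
      _ = 0 := by rw [CharTwo.two_eq_zero (R := k), map_zero]
  have hpderiv : ∀ a ∈ A', ∀ i, pderiv i a = 0 := fun a ha i =>
    (pderiv i).map_eq_zero_of_mem_adjoin_isSquare h2 (by simp [IsSquare.sq]) (hA' ▸ ha)
  have hbij := ofEvenCoords_bijective hA'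
  let e := LinearEquiv.ofBijective (ofEvenCoords A') hbij
  have hrange : (LinearMap.range (derivationMatrix (⟨f, hf⟩ : A') ⟨g, hg⟩)).map
      (e : _ →ₗ[A'] _) = LinearMap.range δ := by
    rw [← LinearMap.range_comp, show (e : _ →ₗ[A'] _) = ofEvenCoords A' from rfl,
      ← comp_ofEvenCoords hf hg hpderiv δ hδ,
      LinearMap.range_comp_of_range_eq_top _ (LinearMap.range_eq_top.mpr hbij.2)]
  exact ⟨(Submodule.Quotient.equiv _ _ e hrange).symm ≪≫ₗ
    quotientRangeDerivationMatrixEquiv (⟨f, hf⟩ : A') ⟨g, hg⟩⟩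
end

section
/- Let k be a field of characteristic 2 with elements r, s ∈ k, let A = k[u²,u³,v²,v³] ⊆ k[u,v], and let δ be the k-derivation of A given by δ(u²)=0, δ(u³)=1+ru², δ(v²)=0, δ(v³)=1+sv². Then the kernel of δ : A → A is the k-subalgebra B = k[u², v², (1+sv²)u³ + (1+ru²)v³]. -/
set_option synthInstance.maxHeartbeats 1000000
set_option maxHeartbeats 2000000

open MvPolynomial

section Aux
variable {k : Type*} [Field k]

private lemma exp2_monomial (d : Fin 2 →₀ ℕ) (a : k) :
    expand 2 (monomial d a) = monomial (2 • d) a := by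
  rw [expand_monomial, monomial_eq]

private lemma coeff_exp2 (d : Fin 2 →₀ ℕ) (f : MvPolynomial (Fin 2) k) :
    coeff (2 • d) (expand 2 f) = coeff d f := by
  induction f using MvPolynomial.induction_on' with
  | monomial e a =>
    rw [exp2_monomial, coeff_monomial, coeff_monomial]
    by_cases h : e = d
    · simp [h]
    · rw [if_neg, if_neg h]
      intro hc
      apply h
      ext i
      have := DFunLike.congr_fun hc i
      simp at this
      omega
  | add p q hp hq => simp [hp, hq]

private lemma exp2_injective :
    Function.Injective (expand 2 : MvPolynomial (Fin 2) k →ₐ[k] MvPolynomial (Fin 2) k) := by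
  intro f g h
  ext d
  have := congrArg (coeff (2 • d)) h
  rwa [coeff_exp2, coeff_exp2] at this

variable [CharP k 2]

private lemma pderiv_exp2 (i : Fin 2) (f : MvPolynomial (Fin 2) k) :
    pderiv i (expand 2 f) = 0 := by
  have h2 : (2 : MvPolynomial (Fin 2) k) = 0 := by
    exact_mod_cast CharP.cast_eq_zero (MvPolynomial (Fin 2) k) 2
  induction f using MvPolynomial.induction_on with
  | C a => simp
  | add p q hp hq => simp [hp, hq]
  | mul_X p j hp =>
    rw [map_mul, expand_X, pderiv_mul, hp, pderiv_pow]
    simp [h2]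

end Aux

section Aux2
variable {k : Type*} [Field k] [CharP k 2]

local notation "R2" => MvPolynomial (Fin 2) k

private lemma two_eq_zero' : (2 : R2) = 0 := by
  exact_mod_cast CharP.cast_eq_zero R2 2

private lemma three_eq_one' : (3 : R2) = 1 := by
  have := two_eq_zero' (k := k)
  linear_combination this

private lemma uniq4 (a b c d : R2)
    (h : expand 2 a + expand 2 b * X 0 ^ 3 + expand 2 c * X 1 ^ 3
        + expand 2 d * (X 0 ^ 3 * X 1 ^ 3) = 0) :
    a = 0 ∧ b = 0 ∧ c = 0 ∧ d = 0 := by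
  have h0 := congrArg (pderiv (R := k) 0) h
  have h1 := congrArg (pderiv (R := k) 1) h
  simp only [map_add, pderiv_mul, pderiv_pow, pderiv_exp2, pderiv_X_self, pderiv_X_of_ne,
    Nat.cast_ofNat, three_eq_one', show (3 - 1 : ℕ) = 2 from rfl, pderiv_one,
    mul_zero, zero_mul, add_zero, zero_add, mul_one, one_mul, map_zero,
    show ((1 : Fin 2) ≠ 0) by decide, show ((0 : Fin 2) ≠ 1) by decide, ne_eq,
    not_false_eq_true] at h0 h1
  -- h0 : expand 2 b * X 0 ^ 2 + expand 2 d * (X 0 ^ 2 * X 1 ^ 3) = 0  (or similar)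
  have h01 := congrArg (pderiv (R := k) 1) h0
  simp only [map_add, pderiv_mul, pderiv_pow, pderiv_exp2, pderiv_X_self, pderiv_X_of_ne,
    Nat.cast_ofNat, three_eq_one', show (3 - 1 : ℕ) = 2 from rfl, pderiv_one,
    mul_zero, zero_mul, add_zero, zero_add, mul_one, one_mul, map_zero,
    show ((1 : Fin 2) ≠ 0) by decide, show ((0 : Fin 2) ≠ 1) by decide, ne_eq,
    not_false_eq_true] at h01
  -- now extract d = 0
  have hX0 : (X 0 : R2) ≠ 0 := X_ne_zero 0
  have hX1 : (X 1 : R2) ≠ 0 := X_ne_zero 1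
  have hed : expand 2 d = 0 := by
    have : expand 2 d * (X 0 ^ 2 * X 1 ^ 2) = 0 := by linear_combination h01
    rcases mul_eq_zero.1 this with h' | h'
    · exact h'
    · exact absurd h' (by exact mul_ne_zero (pow_ne_zero _ hX0) (pow_ne_zero _ hX1))
  have hd : d = 0 := by
    apply exp2_injective; rw [hed, map_zero]
  have heb : expand 2 b = 0 := by
    rw [hed] at h0
    have : expand 2 b * X 0 ^ 2 = 0 := by linear_combination h0
    rcases mul_eq_zero.1 this with h' | h'
    · exact h'
    · exact absurd h' (pow_ne_zero _ hX0)
  have hb : b = 0 := by apply exp2_injective; rw [heb, map_zero]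
  have hec : expand 2 c = 0 := by
    rw [hed] at h1
    have : expand 2 c * X 1 ^ 2 = 0 := by linear_combination h1
    rcases mul_eq_zero.1 this with h' | h'
    · exact h'
    · exact absurd h' (pow_ne_zero _ hX1)
  have hc : c = 0 := by apply exp2_injective; rw [hec, map_zero]
  have ha : a = 0 := by
    apply exp2_injective
    rw [map_zero, ← h, hed, heb, hec]
    ring
  exact ⟨ha, hb, hc, hd⟩

end Aux2

section Aux3
variable {k : Type*} [Field k] [CharP k 2]

local notation "R2" => MvPolynomial (Fin 2) k

private lemma exp2_mem_adjoin (f : R2) :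
    expand 2 f ∈ Algebra.adjoin k ({X 0 ^ 2, X 1 ^ 2} : Set R2) := by
  induction f using MvPolynomial.induction_on with
  | C a => rw [expand_C]; exact Subalgebra.algebraMap_mem _ a
  | add p q hp hq => rw [map_add]; exact add_mem hp hq
  | mul_X p j hp =>
    rw [map_mul, expand_X]
    refine mul_mem hp (Algebra.subset_adjoin ?_)
    fin_cases j
    · exact Set.mem_insert _ _
    · exact Set.mem_insert_of_mem _ rfl

private lemma decomp4 (z : R2)
    (hz : z ∈ Algebra.adjoin k ({X 0 ^ 2, X 0 ^ 3, X 1 ^ 2, X 1 ^ 3} : Set R2)) :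
    ∃ a b c d : R2, z = expand 2 a + expand 2 b * X 0 ^ 3 + expand 2 c * X 1 ^ 3
        + expand 2 d * (X 0 ^ 3 * X 1 ^ 3) := by
  induction hz using Algebra.adjoin_induction with
  | mem x hx =>
    rcases hx with h | h | h | h
    · exact ⟨X 0, 0, 0, 0, by simp [h, expand_X]⟩
    · exact ⟨0, 1, 0, 0, by simp [h]⟩
    · exact ⟨X 1, 0, 0, 0, by simp [h, expand_X]⟩
    · exact ⟨0, 0, 1, 0, by simp [Set.eq_of_mem_singleton h]⟩
  | algebraMap a => exact ⟨C a, 0, 0, 0, by simp [algebraMap_eq]⟩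
  | add x y hx hy ihx ihy =>
    obtain ⟨a1, b1, c1, d1, h1⟩ := ihx
    obtain ⟨a2, b2, c2, d2, h2⟩ := ihy
    exact ⟨a1 + a2, b1 + b2, c1 + c2, d1 + d2, by simp only [h1, h2, map_add]; ring⟩
  | mul x y hx hy ihx ihy =>
    obtain ⟨a1, b1, c1, d1, h1⟩ := ihx
    obtain ⟨a2, b2, c2, d2, h2⟩ := ihy
    refine ⟨a1 * a2 + (b1 * b2) * X 0 ^ 3 + (c1 * c2) * X 1 ^ 3
        + (d1 * d2) * (X 0 ^ 3 * X 1 ^ 3),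
      a1 * b2 + b1 * a2 + (c1 * d2 + d1 * c2) * X 1 ^ 3,
      a1 * c2 + c1 * a2 + (b1 * d2 + d1 * b2) * X 0 ^ 3,
      a1 * d2 + d1 * a2 + b1 * c2 + c1 * b2, ?_⟩
    simp only [h1, h2, map_add, map_mul, expand_X, map_pow]
    ring

end Aux3

section Aux4
variable {k : Type*} [Field k] [CharP k 2]

local notation "R2" => MvPolynomial (Fin 2) k

private lemma constCoeff_ne (t : k) (i : Fin 2) :
    (1 : R2) + C t * X i ≠ 0 := by
  intro h
  have := congrArg (constantCoeff (R := k)) h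
  simp [constantCoeff_X] at this

private lemma div4 (r s : k) (b c : R2)
    (h : b * (1 + C r * X 0) = c * (1 + C s * X 1)) :
    ∃ e : R2, b = e * (1 + C s * X 1) ∧ c = e * (1 + C r * X 0) := by
  have h2R : (2 : R2) = 0 := by exact_mod_cast CharP.cast_eq_zero R2 2
  by_cases hs : s = 0
  · refine ⟨b, by simp [hs], ?_⟩
    rw [hs] at h; simpa using h.symm
  · have hss : (C s : R2) * C s⁻¹ = 1 := by
      rw [← C_mul, mul_inv_cancel₀ hs, C_1]
    set σ : R2 →ₐ[k] R2 := aeval ![X 0, C s⁻¹] with hσ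
    have hσX0 : σ (X 0) = X 0 := by simp [hσ]
    have hσX1 : σ (X 1) = C s⁻¹ := by simp [hσ]
    have hσC : ∀ t : k, σ (C t) = C t := by intro t; simp [hσ, algebraMap_eq]
    have key : ∀ p : R2, (X 1 - C s⁻¹) ∣ (p - σ p) := by
      intro p
      induction p using MvPolynomial.induction_on with
      | C a => rw [hσC, sub_self]; exact dvd_zero _
      | add p q hp hq =>
        rw [map_add]
        have : p + q - (σ p + σ q) = (p - σ p) + (q - σ q) := by ring
        rw [this]; exact dvd_add hp hq
      | mul_X p j hp =>
        rw [map_mul]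
        fin_cases j
        · show X 1 - C s⁻¹ ∣ p * X 0 - σ p * σ (X 0)
          rw [hσX0]
          have : p * X 0 - σ p * X 0 = (p - σ p) * X 0 := by ring
          rw [this]; exact hp.mul_right _
        · show X 1 - C s⁻¹ ∣ p * X 1 - σ p * σ (X 1)
          rw [hσX1]
          have : p * X 1 - σ p * C s⁻¹
              = p * (X 1 - C s⁻¹) + (p - σ p) * C s⁻¹ := by ring
          rw [this]; exact dvd_add (Dvd.intro_left _ rfl) (hp.mul_right _)
    have hσh := congrArg σ h
    have hσP : σ (1 + C r * X 0) = 1 + C r * X 0 := by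
      rw [map_add, map_mul, hσX0, map_one, hσC]
    have hσQ : σ (1 + C s * X 1) = 0 := by
      rw [map_add, map_mul, hσX1, map_one, hσC, hss]
      linear_combination h2R
    rw [map_mul, map_mul, hσP, hσQ, mul_zero] at hσh
    have hσb : σ b = 0 := by
      rcases mul_eq_zero.1 hσh with h' | h'
      · exact h'
      · exact absurd h' (constCoeff_ne r 0)
    obtain ⟨e', he'⟩ : (X 1 - C s⁻¹) ∣ b := by
      have := key b; rwa [hσb, sub_zero] at this
    have hbQ : b = (C s⁻¹ * e') * (1 + C s * X 1) := by
      rw [he']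
      linear_combination (-(X 1 * e')) * hss + (-(C s⁻¹ * e')) * h2R
    have h' : (C s⁻¹ * e' * (1 + C r * X 0)) * (1 + C s * X 1)
        = c * (1 + C s * X 1) := by rw [← h, hbQ]; ring
    exact ⟨C s⁻¹ * e', hbQ, (mul_right_cancel₀ (constCoeff_ne s 1) h').symm⟩

end Aux4


/-- Let `A = k[u²,u³,v²,v³] ⊆ k[u,v]` in characteristic 2 and let `δ` be the
`k`-derivation of `A` with `δ(u²) = 0`, `δ(u³) = 1 + r·u²`, `δ(v²) = 0`,
`δ(v³) = 1 + s·v²`.  Then the kernel of `δ` is the subalgebra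
`k[u², v², (1+s·v²)·u³ + (1+r·u²)·v³]`. -/
theorem stmt7 (k : Type*) [Field k] [CharP k 2] (r s : k)
    (A : Subalgebra k (MvPolynomial (Fin 2) k))
    (hA : A = Algebra.adjoin k {(X 0 : MvPolynomial (Fin 2) k) ^ 2, (X 0) ^ 3,
      (X 1) ^ 2, (X 1) ^ 3})
    (u2 u3 v2 v3 : A)
    (hu2 : (u2 : MvPolynomial (Fin 2) k) = (X 0) ^ 2)
    (hu3 : (u3 : MvPolynomial (Fin 2) k) = (X 0) ^ 3)
    (hv2 : (v2 : MvPolynomial (Fin 2) k) = (X 1) ^ 2)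
    (hv3 : (v3 : MvPolynomial (Fin 2) k) = (X 1) ^ 3)
    (δ : Derivation k A A)
    (hδu2 : δ u2 = 0) (hδv2 : δ v2 = 0)
    (hδu3 : δ u3 = 1 + algebraMap k A r * u2)
    (hδv3 : δ v3 = 1 + algebraMap k A s * v2) :
    ∀ x : A, δ x = 0 ↔ x ∈ Algebra.adjoin k
      ({u2, v2, (1 + algebraMap k A s * v2) * u3 + (1 + algebraMap k A r * u2) * v3} :
        Set A) := by
  intro x
  have h2R : (2 : MvPolynomial (Fin 2) k) = 0 := by
    exact_mod_cast CharP.cast_eq_zero (MvPolynomial (Fin 2) k) 2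
  have h2A : (2 : A) = 0 := by
    apply Subtype.ext
    push_cast
    exact h2R
  set W : A := (1 + algebraMap k A s * v2) * u3 + (1 + algebraMap k A r * u2) * v3 with hWdef
  have hQcoe : ((1 + algebraMap k A s * v2 : A) : MvPolynomial (Fin 2) k)
      = expand 2 (1 + C s * X 1) := by
    push_cast
    rw [hv2, map_add, map_mul, expand_X, map_one, expand_C, algebraMap_eq]
  have hPcoe : ((1 + algebraMap k A r * u2 : A) : MvPolynomial (Fin 2) k)
      = expand 2 (1 + C r * X 0) := by
    push_cast
    rw [hu2, map_add, map_mul, expand_X, map_one, expand_C, algebraMap_eq]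
  have hWcoe : (W : MvPolynomial (Fin 2) k)
      = expand 2 (1 + C s * X 1) * X 0 ^ 3 + expand 2 (1 + C r * X 0) * X 1 ^ 3 := by
    rw [hWdef]
    push_cast
    rw [hu3, hv3, ← hQcoe, ← hPcoe]
    push_cast
    ring
  have memA : ∀ f : MvPolynomial (Fin 2) k, expand 2 f ∈ A := by
    intro f
    rw [hA]
    refine Algebra.adjoin_mono ?_ (exp2_mem_adjoin f)
    intro t ht
    simp only [Set.mem_insert_iff, Set.mem_singleton_iff] at ht ⊢
    tauto
  have memAdj2 : ∀ z : A, (z : MvPolynomial (Fin 2) k) ∈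
      Algebra.adjoin k ({X 0 ^ 2, X 1 ^ 2} : Set (MvPolynomial (Fin 2) k)) →
      z ∈ Algebra.adjoin k ({u2, v2} : Set A) := by
    intro z hz
    have himg : (Algebra.adjoin k ({u2, v2} : Set A)).map A.val
        = Algebra.adjoin k ({X 0 ^ 2, X 1 ^ 2} : Set (MvPolynomial (Fin 2) k)) := by
      rw [AlgHom.map_adjoin]
      congr 1
      rw [Set.image_insert_eq, Set.image_singleton]
      simp [hu2, hv2]
    rw [← himg] at hz
    rcases hz with ⟨w, hw, hwz⟩
    have : w = z := Subtype.ext hwz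
    rwa [← this]
  -- the derivation vanishes on the adjoin
  have hδQ : δ (1 + algebraMap k A s * v2) = 0 := by
    rw [map_add, Derivation.map_one_eq_zero, Derivation.leibniz, hδv2,
      Derivation.map_algebraMap, smul_zero, smul_zero, add_zero, add_zero]
  have hδP : δ (1 + algebraMap k A r * u2) = 0 := by
    rw [map_add, Derivation.map_one_eq_zero, Derivation.leibniz, hδu2,
      Derivation.map_algebraMap, smul_zero, smul_zero, add_zero, add_zero]
  have hδW : δ W = 0 := by
    rw [hWdef, map_add, Derivation.leibniz, Derivation.leibniz, hδQ, hδP, hδu3, hδv3,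
      smul_zero, smul_zero, add_zero, add_zero, smul_eq_mul, smul_eq_mul]
    linear_combination ((1 + algebraMap k A s * v2) * (1 + algebraMap k A r * u2)) * h2A
  have hδadj : ∀ z : A, z ∈ Algebra.adjoin k ({u2, v2, W} : Set A) → δ z = 0 := by
    intro z hz
    induction hz using Algebra.adjoin_induction with
    | mem t ht =>
      rcases ht with h | h | h
      · rw [h, hδu2]
      · rw [h, hδv2]
      · rw [Set.eq_of_mem_singleton h, hδW]
    | algebraMap a => exact Derivation.map_algebraMap δ a
    | add p q _ _ hp hq => rw [map_add, hp, hq, add_zero]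
    | mul p q _ _ hp hq => rw [Derivation.leibniz, hp, hq, smul_zero, smul_zero, add_zero]
  constructor
  · -- hard direction
    intro hδx
    have hxA : (x : MvPolynomial (Fin 2) k) ∈ Algebra.adjoin k
        ({X 0 ^ 2, X 0 ^ 3, X 1 ^ 2, X 1 ^ 3} : Set (MvPolynomial (Fin 2) k)) := by
      rw [← hA]; exact x.2
    obtain ⟨a, b, c, d, hdec⟩ := decomp4 (x : MvPolynomial (Fin 2) k) hxA
    set α : A := ⟨expand 2 a, memA a⟩ with hα
    set β : A := ⟨expand 2 b, memA b⟩ with hβ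
    set γ : A := ⟨expand 2 c, memA c⟩ with hγ
    set dd : A := ⟨expand 2 d, memA d⟩ with hdd
    have hadj2 : ∀ f : MvPolynomial (Fin 2) k, ∀ z : A,
        (z : MvPolynomial (Fin 2) k) = expand 2 f →
        z ∈ Algebra.adjoin k ({u2, v2, W} : Set A) := by
      intro f z hzf
      refine Algebra.adjoin_mono ?_ (memAdj2 z (hzf ▸ exp2_mem_adjoin f))
      intro t ht
      simp only [Set.mem_insert_iff, Set.mem_singleton_iff] at ht ⊢
      tauto
    have hδα : δ α = 0 := hδadj α (hadj2 a α rfl)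
    have hδβ : δ β = 0 := hδadj β (hadj2 b β rfl)
    have hδγ : δ γ = 0 := hδadj γ (hadj2 c γ rfl)
    have hδdd : δ dd = 0 := hδadj dd (hadj2 d dd rfl)
    have hxsum : x = α + β * u3 + γ * v3 + dd * (u3 * v3) := by
      apply Subtype.ext
      push_cast
      simp only [hu3, hv3]
      exact hdec
    have hδeq : (0 : A) = β * (1 + algebraMap k A r * u2) + γ * (1 + algebraMap k A s * v2)
        + dd * (u3 * (1 + algebraMap k A s * v2) + v3 * (1 + algebraMap k A r * u2)) := by
      rw [← hδx]
      conv_lhs => rw [hxsum]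
      rw [map_add, map_add, map_add, Derivation.leibniz, Derivation.leibniz,
        Derivation.leibniz, Derivation.leibniz, hδα, hδβ, hδγ, hδdd, hδu3, hδv3]
      simp only [smul_zero, smul_eq_mul, add_zero, zero_add, mul_zero]
      try ring
    have hδeqR := congrArg (Subtype.val) hδeq
    push_cast at hδeqR
    rw [hu3, hv3, hu2, hv2, algebraMap_eq] at hδeqR
    have huniq := uniq4 (b * (1 + C r * X 0) + c * (1 + C s * X 1))
      (d * (1 + C s * X 1)) (d * (1 + C r * X 0)) 0 ?_
    · obtain ⟨h1, h2, h3, -⟩ := huniq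
      have hd : d = 0 := by
        rcases mul_eq_zero.1 h3 with h' | h'
        · exact h'
        · exact absurd h' (constCoeff_ne r 0)
      have hbc : b * (1 + C r * X 0) = c * (1 + C s * X 1) := by
        linear_combination h1 - (c * (1 + C s * X 1)) * h2R
      obtain ⟨e, hbe, hce⟩ := div4 r s b c hbc
      set ε : A := ⟨expand 2 e, memA e⟩ with hε
      have hxW : x = α + ε * W := by
        apply Subtype.ext
        push_cast
        rw [hWcoe, hdec, hbe, hce, hd]
        simp only [map_add, map_mul, map_zero]
        ring
      rw [hxW]
      refine add_mem (hadj2 a α rfl) (mul_mem (hadj2 e ε rfl) (Algebra.subset_adjoin ?_))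
      simp
    · simp only [map_add, map_mul, map_one, map_zero, expand_C, expand_X]
      linear_combination -hδeqR
  · exact hδadj x
end

section
/- Let k be a field of characteristic 2 and r, s ∈ k. The k-algebra B = k[u², v², (1+sv²)u³ + (1+ru²)v³] ⊆ k[u,v] is isomorphic to k[a,b,c]/(c² + a³ + b³ + s²a³b² + r²a²b³) via a ↦ u², b ↦ v², c ↦ (1+sv²)u³ + (1+ru²)v³. -/
/-!
Write `k[a,b,c] = A[c]` with `A = k[a,b]` and `γ = (1+sv²)u³ + (1+ru²)v³`. Since squaring is
additive in characteristic 2, `γ² = g(u²,v²)` for `g = a³ + b³ + s²a³b² + r²a²b³`, so the monic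
quadratic `F = c² + g` lies in the kernel. Every element of the kernel reduces modulo `F` to
`p₀ + p₁ c` with `p₀, p₁ ∈ A`, which maps to `p₀(u²,v²) + p₁(u²,v²)·γ`. All monomials of the
first summand have even total degree and all monomials of the second odd total degree, so both
vanish; since `γ ≠ 0` and `p ↦ p(u²,v²)` is injective, `p₀ = p₁ = 0`.
-/

open MvPolynomial

theorem Polynomial.ker_eq_span_singleton_of_monic {A B : Type*} [CommRing A] [Nontrivial A]
    [Semiring B] (φ : Polynomial A →+* B) {F : Polynomial A} (hF : F.Monic) (hφF : φ F = 0)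
    (hφ : ∀ p : Polynomial A, p.degree < F.degree → φ p = 0 → p = 0) :
    RingHom.ker φ = Ideal.span {F} := by
  ext p
  rw [RingHom.mem_ker, Ideal.mem_span_singleton]
  constructor
  · intro hp
    rw [← Polynomial.modByMonic_eq_zero_iff_dvd hF]
    refine hφ _ (Polynomial.degree_modByMonic_lt p hF) ?_
    have := congrArg φ (Polynomial.modByMonic_add_div p F)
    rwa [map_add, map_mul, hφF, zero_mul, add_zero, hp] at this
  · rintro ⟨q, rfl⟩
    rw [map_mul, hφF, zero_mul]

namespace MvPolynomial

theorem isWeightedHomogeneous_expand {σ R M : Type*} [CommSemiring R] [AddCommMonoid M]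
    {w : σ → M} {n : ℕ} (hw : ∀ i, n • w i = 0) (p : MvPolynomial σ R) :
    IsWeightedHomogeneous w (expand n p) 0 := by
  induction p using MvPolynomial.induction_on with
  | C a => rw [expand_C]; exact isWeightedHomogeneous_C w a
  | add p q hp hq => rw [map_add]; exact hp.add hq
  | mul_X p i hp =>
    rw [map_mul, expand_X]
    simpa [hw] using hp.mul ((isWeightedHomogeneous_X R w i).pow n)

theorem IsWeightedHomogeneous.eq_zero_of_add_eq_zero {σ R M : Type*} [CommRing R]
    [AddCommMonoid M] {w : σ → M} {φ ψ : MvPolynomial σ R} {m n : M}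
    (hφ : IsWeightedHomogeneous w φ m) (hψ : IsWeightedHomogeneous w ψ n) (hmn : m ≠ n)
    (h : φ + ψ = 0) : φ = 0 ∧ ψ = 0 := by
  have hψφ : ψ = -φ := eq_neg_of_add_eq_zero_right h
  have hψ0 : ψ = 0 := by
    by_contra hne
    exact hmn ((hψφ ▸ hφ.neg).inj_right hne hψ)
  exact ⟨by simpa [hψ0] using h, hψ0⟩

-- The weight `1 : σ → ZMod 2` grades by the parity of the total degree.
theorem eq_zero_of_aevalTower_expand_two_eq_zero {σ R : Type*} [CommRing R] [IsDomain R]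
    {c : MvPolynomial σ R} (hc : IsWeightedHomogeneous 1 c (1 : ZMod 2)) (hc0 : c ≠ 0)
    {p : Polynomial (MvPolynomial σ R)} (hp : p.degree ≤ 1)
    (h : Polynomial.aevalTower (expand 2) c p = 0) : p = 0 := by
  have hw : ∀ i : σ, 2 • (1 : σ → ZMod 2) i = 0 := fun _ => rfl
  rw [Polynomial.eq_X_add_C_of_degree_le_one hp] at h ⊢
  simp only [map_add, map_mul, Polynomial.aevalTower_C, Polynomial.aevalTower_X] at h
  have hodd : IsWeightedHomogeneous 1 (expand 2 (p.coeff 1) * c) (1 : ZMod 2) := by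
    simpa using (isWeightedHomogeneous_expand hw _).mul hc
  obtain ⟨h₁, h₀⟩ := hodd.eq_zero_of_add_eq_zero (isWeightedHomogeneous_expand hw _)
    (by decide) h
  rw [(expand_eq_zero two_pos).mp h₀, (expand_eq_zero two_pos).mp
    ((mul_eq_zero.mp h₁).resolve_right hc0)]
  simp

end MvPolynomial

section

variable {k : Type*} [Field k]

theorem gen_isWeightedHomogeneous (r s : k) :
    IsWeightedHomogeneous 1 ((1 + C s * X 1 ^ 2) * X 0 ^ 3 + (1 + C r * X 0 ^ 2) * X 1 ^ 3 :
      MvPolynomial (Fin 2) k) (1 : ZMod 2) := by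
  have hodd (a : k) (i j : Fin 2) : IsWeightedHomogeneous 1
      ((1 + C a * X j ^ 2) * X i ^ 3 : MvPolynomial (Fin 2) k) (1 : ZMod 2) :=
    ((isWeightedHomogeneous_one k 1).add (((isWeightedHomogeneous_X k 1 j).pow 2).C_mul a)).mul
      ((isWeightedHomogeneous_X k 1 i).pow 3)
  exact (hodd s 0 1).add (hodd r 1 0)

theorem gen_ne_zero (r s : k) :
    ((1 + C s * X 1 ^ 2) * X 0 ^ 3 + (1 + C r * X 0 ^ 2) * X 1 ^ 3 :
      MvPolynomial (Fin 2) k) ≠ 0 := by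
  intro h
  simpa using congrArg (eval ![1, 0]) h

theorem gen_sq [CharP k 2] (r s : k) :
    ((1 + C s * X 1 ^ 2) * X 0 ^ 3 + (1 + C r * X 0 ^ 2) * X 1 ^ 3 :
      MvPolynomial (Fin 2) k) ^ 2 = expand 2 (X 0 ^ 3 + X 1 ^ 3
        + C (s ^ 2) * X 0 ^ 3 * X 1 ^ 2 + C (r ^ 2) * X 0 ^ 2 * X 1 ^ 3) := by
  simp only [CharTwo.add_sq, mul_pow, one_pow, map_add, map_mul, map_pow, expand_X, expand_C]
  ring

theorem aeval_sq_sq_eq_aevalTower_comp (γ : MvPolynomial (Fin 2) k) :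
    aeval ![(X 0 : MvPolynomial (Fin 2) k) ^ 2, X 1 ^ 2, γ] =
      (Polynomial.aevalTower (expand 2 : MvPolynomial (Fin 2) k →ₐ[k] _) γ).comp
        ((renameEquiv k finSuccEquivLast).trans (optionEquivLeft k (Fin 2))).toAlgHom := by
  have h₀ : finSuccEquivLast (0 : Fin 3) = some 0 := rfl
  have h₁ : finSuccEquivLast (1 : Fin 3) = some 1 := rfl
  have h₂ : finSuccEquivLast (2 : Fin 3) = none := rfl
  refine algHom_ext fun i => ?_
  fin_cases i <;> simp [h₀, h₁, h₂]

theorem ker_aevalTower_expand_two_gen [CharP k 2] (r s : k) :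
    RingHom.ker (Polynomial.aevalTower (expand 2 : MvPolynomial (Fin 2) k →ₐ[k] _)
        ((1 + C s * X 1 ^ 2) * X 0 ^ 3 + (1 + C r * X 0 ^ 2) * X 1 ^ 3)).toRingHom
      = Ideal.span {Polynomial.X ^ 2 + Polynomial.C (X 0 ^ 3 + X 1 ^ 3
          + C (s ^ 2) * X 0 ^ 3 * X 1 ^ 2 + C (r ^ 2) * X 0 ^ 2 * X 1 ^ 3)} := by
  refine Polynomial.ker_eq_span_singleton_of_monic _ (Polynomial.monic_X_pow_add_C _ two_ne_zero)
    ?_ fun p hp => eq_zero_of_aevalTower_expand_two_eq_zero (gen_isWeightedHomogeneous r s)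
      (gen_ne_zero r s) (Order.le_of_lt_succ ?_)
  · simp only [AlgHom.toRingHom_eq_coe, RingHom.coe_coe, map_add, map_pow,
      Polynomial.aevalTower_X, Polynomial.aevalTower_C, gen_sq]
    exact CharTwo.add_self_eq_zero _
  · rwa [Polynomial.degree_X_pow_add_C two_pos] at hp

theorem ker_aeval_eq_span [CharP k 2] (r s : k) :
    RingHom.ker (aeval (R := k)
        ![(X 0 : MvPolynomial (Fin 2) k) ^ 2, (X 1) ^ 2,
          (1 + C s * (X 1) ^ 2) * (X 0) ^ 3 + (1 + C r * (X 0) ^ 2) * (X 1) ^ 3]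
        : MvPolynomial (Fin 3) k →ₐ[k] MvPolynomial (Fin 2) k).toRingHom
      = Ideal.span {(X 2 : MvPolynomial (Fin 3) k) ^ 2 + (X 0) ^ 3 + (X 1) ^ 3
          + C (s ^ 2) * (X 0) ^ 3 * (X 1) ^ 2 + C (r ^ 2) * (X 0) ^ 2 * (X 1) ^ 3} := by
  set E := (renameEquiv k finSuccEquivLast).trans (optionEquivLeft k (Fin 2))
  rw [aeval_sq_sq_eq_aevalTower_comp]
  change RingHom.ker (RingHom.comp _ E.toRingEquiv.toRingHom) = _
  rw [← RingHom.comap_ker, ker_aevalTower_expand_two_gen, RingEquiv.toRingHom_eq_coe,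
    Ideal.comap_coe, ← Ideal.map_symm, Ideal.map_span, Set.image_singleton]
  congr 2
  rw [RingEquiv.symm_apply_eq]
  have h₀ : finSuccEquivLast (0 : Fin 3) = some 0 := rfl
  have h₁ : finSuccEquivLast (1 : Fin 3) = some 1 := rfl
  have h₂ : finSuccEquivLast (2 : Fin 3) = none := rfl
  simp [E, h₀, h₁, h₂]
  ring

end

/-- In characteristic 2, the `k`-algebra
`B = k[u², v², (1+s·v²)u³ + (1+r·u²)v³] ⊆ k[u,v]` is isomorphic to
`k[a,b,c]/(c² + a³ + b³ + s²a³b² + r²a²b³)` via `a ↦ u²`, `b ↦ v²`,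
`c ↦ (1+s·v²)u³ + (1+r·u²)v³`: the corresponding evaluation map
`k[a,b,c] → k[u,v]` has kernel the principal ideal on the displayed relation,
and range the subalgebra `B`. -/
theorem stmt8 (k : Type*) [Field k] [CharP k 2] (r s : k) :
    RingHom.ker (aeval (R := k)
        ![(X 0 : MvPolynomial (Fin 2) k) ^ 2, (X 1) ^ 2,
          (1 + C s * (X 1) ^ 2) * (X 0) ^ 3 + (1 + C r * (X 0) ^ 2) * (X 1) ^ 3]
        : MvPolynomial (Fin 3) k →ₐ[k] MvPolynomial (Fin 2) k).toRingHom
      = Ideal.span {(X 2 : MvPolynomial (Fin 3) k) ^ 2 + (X 0) ^ 3 + (X 1) ^ 3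
          + C (s ^ 2) * (X 0) ^ 3 * (X 1) ^ 2 + C (r ^ 2) * (X 0) ^ 2 * (X 1) ^ 3} ∧
    (aeval (R := k)
        ![(X 0 : MvPolynomial (Fin 2) k) ^ 2, (X 1) ^ 2,
          (1 + C s * (X 1) ^ 2) * (X 0) ^ 3 + (1 + C r * (X 0) ^ 2) * (X 1) ^ 3]
        : MvPolynomial (Fin 3) k →ₐ[k] MvPolynomial (Fin 2) k).range
      = Algebra.adjoin k
        ({(X 0 : MvPolynomial (Fin 2) k) ^ 2, (X 1) ^ 2,
          (1 + C s * (X 1) ^ 2) * (X 0) ^ 3 + (1 + C r * (X 0) ^ 2) * (X 1) ^ 3} :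
          Set (MvPolynomial (Fin 2) k)) := by
  refine ⟨ker_aeval_eq_span r s, ?_⟩
  rw [← Algebra.adjoin_range_eq_range_aeval, Matrix.range_cons, Matrix.range_cons,
    Matrix.range_cons, Matrix.range_empty, Set.union_empty, Set.singleton_union,
    Set.singleton_union]
end

section
/- Let k be a field of characteristic 2 and consider the power series ring R[[a,b,c]] over a commutative k-algebra R. Let f = c² + a³ + b³ and let g ∈ R[[a,b,c]] be any element of the ideal (a³b², a²b³). Then there is an R-algebra automorphism φ of R[[a,b,c]] with φ(f + g) = f. In particular R[[a,b,c]]/(c² + a³ + b³ + s²a³b² + r²a²b³) ≅ R[[a,b,c]]/(c² + a³ + b³) for any r, s ∈ R. -/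
/-!
Write `g = p a³b² + q a²b³`. Since `3` is a unit (it equals `1` in characteristic 2), the
fixed point of a contraction for the order filtration gives `v, w` with `(1 + b²v)³ = 1 + b²p`
and `(1 + a²w)³ = 1 + a²q`. The substitution `ψ : a ↦ a(1 + b²v), b ↦ b(1 + a²w), c ↦ c` then
satisfies `ψ f = f + g`, and `φ = ψ⁻¹`. As `ψ X_i ≡ X_i` modulo order 2, `ψ x - x` has larger
order than `x`, so `x ↦ x + h - ψ x` is again a contraction, whose unique fixed point is the
unique solution of `ψ x = h`: `ψ` is bijective.
-/

namespace MvPowerSeries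

variable {σ R : Type*} [CommRing R]

theorem le_order_sub_of_le_order_succ_sub {F : ℕ → MvPowerSeries σ R}
    (hF : ∀ n : ℕ, (n : ℕ∞) ≤ (F (n + 1) - F n).order) {m n : ℕ} (hmn : n ≤ m) :
    (n : ℕ∞) ≤ (F m - F n).order := by
  induction m, hmn using Nat.le_induction with
  | base => simp
  | succ m hnm ih =>
    calc (n : ℕ∞) ≤ min (F (m + 1) - F m).order (F m - F n).order :=
          le_min ((Nat.cast_le.mpr hnm).trans (hF m)) ih
      _ ≤ (F (m + 1) - F m + (F m - F n)).order := min_order_le_add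
      _ = (F (m + 1) - F n).order := by rw [sub_add_sub_cancel]

theorem exists_forall_le_order_sub_of_le_order_succ_sub {F : ℕ → MvPowerSeries σ R}
    (hF : ∀ n : ℕ, (n : ℕ∞) ≤ (F (n + 1) - F n).order) :
    ∃ L, ∀ n : ℕ, (n : ℕ∞) ≤ (L - F n).order := by
  let L : MvPowerSeries σ R := fun e ↦ coeff e (F (e.degree + 1))
  refine ⟨L, fun n ↦ nat_le_order fun e he ↦ ?_⟩
  have h : coeff e (F n - F (e.degree + 1)) = 0 :=
    coeff_of_lt_order <| (Nat.cast_lt.mpr e.degree.lt_succ_self).trans_le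
      (le_order_sub_of_le_order_succ_sub hF he)
  rw [map_sub, sub_eq_zero] at h ⊢
  exact h.symm

theorem existsUnique_fixedPoint_of_contracting {T : MvPowerSeries σ R → MvPowerSeries σ R}
    (hT : ∀ x y, (x - y).order + 1 ≤ (T x - T y).order) : ∃! x, T x = x := by
  set F : ℕ → MvPowerSeries σ R := fun n ↦ T^[n] 0
  have hFsucc (n : ℕ) : F (n + 1) = T (F n) := Function.iterate_succ_apply' T n 0
  have hF (n : ℕ) : (n : ℕ∞) ≤ (F (n + 1) - F n).order := by
    induction n with
    | zero => simp
    | succ n ih =>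
      calc ((n + 1 : ℕ) : ℕ∞) ≤ (F (n + 1) - F n).order + 1 := by push_cast; gcongr
        _ ≤ (T (F (n + 1)) - T (F n)).order := hT _ _
        _ = _ := by rw [← hFsucc, ← hFsucc]
  obtain ⟨L, hL⟩ := exists_forall_le_order_sub_of_le_order_succ_sub hF
  have hTL : T L = L := by
    rw [← sub_eq_zero, ← order_eq_top_iff, ENat.eq_top_iff_forall_ge]
    intro n
    have h1 : (n : ℕ∞) ≤ (T L - T (F n)).order := (le_add_right (hL n)).trans (hT _ _)
    have h2 : (n : ℕ∞) ≤ (T (F n) - L).order := by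
      rw [← hFsucc, ← order_neg, neg_sub]
      exact (Nat.cast_le.mpr n.le_succ).trans (hL (n + 1))
    calc (n : ℕ∞) ≤ min (T L - T (F n)).order (T (F n) - L).order := le_min h1 h2
      _ ≤ (T L - T (F n) + (T (F n) - L)).order := min_order_le_add
      _ = (T L - L).order := by rw [sub_add_sub_cancel]
  refine ⟨L, hTL, fun y hy ↦ ?_⟩
  have h : (y - L).order + 1 ≤ (y - L).order := by simpa only [hy, hTL] using hT y L
  rw [← sub_eq_zero, ← order_eq_top_iff]
  by_contra hne
  exact (lt_irrefl _) ((ENat.add_one_le_iff hne).mp h)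

theorem le_order_mul_sub_mul {x y x' y' : MvPowerSeries σ R} {k k' : ℕ∞} (hx : k ≤ x.order)
    (hy' : k' ≤ y'.order) (h : k + 1 ≤ (x - y).order) (h' : k' + 1 ≤ (x' - y').order) :
    k + k' + 1 ≤ (x * x' - y * y').order :=
  calc k + k' + 1 ≤ min (x * (x' - y')).order ((x - y) * y').order :=
        le_min (by rw [add_assoc]; exact (add_le_add hx h').trans le_order_mul)
          (by rw [add_right_comm]; exact (add_le_add h hy').trans le_order_mul)
    _ ≤ (x * x' - y * y').order := by
        rw [show x * x' - y * y' = x * (x' - y') + (x - y) * y' by ring]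
        exact min_order_le_add

theorem le_order_prod_sub_prod {ι : Type*} (s : Finset ι) {x y : ι → MvPowerSeries σ R}
    {k : ι → ℕ∞} (hx : ∀ i, k i ≤ (x i).order) (hy : ∀ i, k i ≤ (y i).order)
    (hxy : ∀ i, k i + 1 ≤ (x i - y i).order) :
    ∑ i ∈ s, k i + 1 ≤ (∏ i ∈ s, x i - ∏ i ∈ s, y i).order := by
  classical
  induction s using Finset.induction_on with
  | empty => simp
  | insert i s hi ih =>
    rw [Finset.sum_insert hi, Finset.prod_insert hi, Finset.prod_insert hi]
    exact le_order_mul_sub_mul (hx i)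
      ((Finset.sum_le_sum fun j _ ↦ hy j).trans (le_order_prod _ _)) (hxy i) ih

theorem le_order_pow_sub_pow {x y : MvPowerSeries σ R} (hx : 1 ≤ x.order) (hy : 1 ≤ y.order)
    (hxy : 2 ≤ (x - y).order) (n : ℕ) : (n : ℕ∞) + 1 ≤ (x ^ n - y ^ n).order := by
  simpa using le_order_prod_sub_prod (Finset.range n) (x := fun _ ↦ x) (y := fun _ ↦ y)
    (fun _ ↦ hx) (fun _ ↦ hy) (fun _ ↦ hxy)

theorem le_order_prod_pow_sub_prod_pow {x y : σ → MvPowerSeries σ R}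
    (hx : ∀ i, 1 ≤ (x i).order) (hy : ∀ i, 1 ≤ (y i).order)
    (hxy : ∀ i, 2 ≤ (x i - y i).order) (d : σ →₀ ℕ) :
    (d.degree : ℕ∞) + 1 ≤ ((d.prod fun i n ↦ x i ^ n) - d.prod fun i n ↦ y i ^ n).order := by
  have hpow {z : σ → MvPowerSeries σ R} (hz : ∀ i, 1 ≤ (z i).order) (i : σ) :
      (d i : ℕ∞) ≤ (z i ^ d i).order :=
    le_order_pow_of_constantCoeff_eq_zero _ (one_le_order_iff_constCoeff_eq_zero.mp (hz i))
  simpa [Finsupp.degree_apply, Finsupp.prod] using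
    le_order_prod_sub_prod d.support (hpow hx) (hpow hy) fun i ↦
      le_order_pow_sub_pow (hx i) (hy i) (hxy i) (d i)

theorem one_le_order_of_two_le_order_sub_X {f : MvPowerSeries σ R} {i : σ}
    (h : 2 ≤ (f - X i).order) : 1 ≤ f.order :=
  calc (1 : ℕ∞) ≤ min (f - X i).order (X i : MvPowerSeries σ R).order :=
        le_min (one_le_two.trans h) (one_le_order_iff_constCoeff_eq_zero.mpr (constantCoeff_X i))
    _ ≤ (f - X i + X i).order := min_order_le_add
    _ = f.order := by rw [sub_add_cancel]

section Substitution

variable [Finite σ] {a : σ → MvPowerSeries σ R}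

theorem HasSubst.of_two_le_order_sub_X (ha : ∀ i, 2 ≤ (a i - X i).order) : HasSubst a :=
  hasSubst_of_constantCoeff_zero fun i ↦
    one_le_order_iff_constCoeff_eq_zero.mp (one_le_order_of_two_le_order_sub_X (ha i))

theorem le_order_subst_sub_self (ha : ∀ i, 2 ≤ (a i - X i).order) (f : MvPowerSeries σ R) :
    f.order + 1 ≤ (subst a f - f).order := by
  have hX : HasSubst (X : σ → MvPowerSeries σ R) := HasSubst.X
  refine le_order fun e he ↦ ?_
  have hf : coeff e f = coeff e (subst X f) := by rw [subst_self]; rfl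
  rw [map_sub, hf, coeff_subst (.of_two_le_order_sub_X ha), coeff_subst hX,
    ← finsum_sub_distrib (coeff_subst_finite (.of_two_le_order_sub_X ha) f e)
      (coeff_subst_finite hX f e)]
  refine finsum_eq_zero_of_forall_eq_zero fun d ↦ ?_
  rw [← smul_sub, ← map_sub]
  by_cases hd : coeff d f = 0
  · rw [hd, zero_smul]
  rw [coeff_of_lt_order (he.trans_le ?_), smul_zero]
  exact (add_le_add (order_le hd) le_rfl).trans <| le_order_prod_pow_sub_prod_pow
    (fun i ↦ one_le_order_of_two_le_order_sub_X (ha i))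
    (fun i ↦ one_le_order_iff_constCoeff_eq_zero.mpr (constantCoeff_X i)) ha d

theorem bijective_subst_of_two_le_order_sub_X (ha : ∀ i, 2 ≤ (a i - X i).order) :
    Function.Bijective (subst a : MvPowerSeries σ R → MvPowerSeries σ R) := by
  refine (Function.bijective_iff_existsUnique _).mpr fun h ↦ ?_
  have hT : ∀ x y, (x - y).order + 1 ≤
      (x + (h - subst a x) - (y + (h - subst a y))).order := fun x y ↦ by
    rw [show x + (h - subst a x) - (y + (h - subst a y)) = -(subst a (x - y) - (x - y)) by
      rw [subst_sub (.of_two_le_order_sub_X ha)]; ring, order_neg]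
    exact le_order_subst_sub_self ha _
  simpa [add_eq_left, sub_eq_zero, eq_comm] using existsUnique_fixedPoint_of_contracting hT

end Substitution

theorem exists_one_add_mul_pow_three_eq (h3 : IsUnit (3 : R)) {u : MvPowerSeries σ R}
    (hu : 1 ≤ u.order) (p : MvPowerSeries σ R) : ∃ w, (1 + u * w) ^ 3 = 1 + u * p := by
  obtain ⟨t, ht⟩ := h3.exists_right_inv
  have ht' : (3 : MvPowerSeries σ R) * C t = 1 := by
    rw [← map_ofNat C 3, ← map_mul, ht, map_one]
  -- a fixed point solves `3w + 3uw² + u²w³ = p`, i.e. `(1 + uw)³ = 1 + up`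
  let T : MvPowerSeries σ R → MvPowerSeries σ R :=
    fun w ↦ C t * (p - 3 * u * w ^ 2 - u ^ 2 * w ^ 3)
  have hT : ∀ x y, (x - y).order + 1 ≤ (T x - T y).order := fun x y ↦ by
    rw [show T x - T y = (x - y) * (u * (C t * (-(3 * (x + y)) - u * (x ^ 2 + x * y + y ^ 2))))
      by ring]
    exact (add_le_add le_rfl (hu.trans (le_self_add.trans le_order_mul))).trans le_order_mul
  obtain ⟨w, hw, -⟩ := existsUnique_fixedPoint_of_contracting hT
  refine ⟨w, ?_⟩
  linear_combination (-3 * u) * hw + u * (p - 3 * u * w ^ 2 - u ^ 2 * w ^ 3) * ht'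

theorem exists_algEquiv_apply_eq_self_add (h3 : IsUnit (3 : R))
    (p q : MvPowerSeries (Fin 3) R) :
    ∃ ψ : MvPowerSeries (Fin 3) R ≃ₐ[R] MvPowerSeries (Fin 3) R,
      ψ (X 2 ^ 2 + X 0 ^ 3 + X 1 ^ 3) =
        X 2 ^ 2 + X 0 ^ 3 + X 1 ^ 3 + (p * (X 0 ^ 3 * X 1 ^ 2) + q * (X 0 ^ 2 * X 1 ^ 3)) := by
  have hX (i : Fin 3) : 1 ≤ (X i : MvPowerSeries (Fin 3) R).order :=
    one_le_order_iff_constCoeff_eq_zero.mpr (constantCoeff_X i)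
  have hXsq (i : Fin 3) : 1 ≤ (X i ^ 2 : MvPowerSeries (Fin 3) R).order :=
    one_le_order_iff_constCoeff_eq_zero.mpr (by simp)
  have hXmulX (i j : Fin 3) (y : MvPowerSeries (Fin 3) R) : 2 ≤ (X i * X j * y).order :=
    (add_le_add (hX i) (hX j)).trans (le_order_mul.trans (le_self_add.trans le_order_mul))
  obtain ⟨v, hv⟩ := exists_one_add_mul_pow_three_eq h3 (hXsq 1) p
  obtain ⟨w, hw⟩ := exists_one_add_mul_pow_three_eq h3 (hXsq 0) q
  set a : Fin 3 → MvPowerSeries (Fin 3) R :=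
    ![X 0 * (1 + X 1 ^ 2 * v), X 1 * (1 + X 0 ^ 2 * w), X 2]
  have ha : ∀ i, 2 ≤ (a i - X i).order := by
    intro i
    fin_cases i
    · simpa [a, show X 0 * (1 + X 1 ^ 2 * v) - X 0 = X 0 * X 1 * (X 1 * v) by ring]
        using hXmulX 0 1 (X 1 * v)
    · simpa [a, show X 1 * (1 + X 0 ^ 2 * w) - X 1 = X 1 * X 0 * (X 0 * w) by ring]
        using hXmulX 1 0 (X 0 * w)
    · simp [a]
  refine ⟨AlgEquiv.ofBijective (substAlgHom (.of_two_le_order_sub_X ha)) ?_, ?_⟩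
  · rw [coe_substAlgHom]
    exact bijective_subst_of_two_le_order_sub_X ha
  · simp only [AlgEquiv.ofBijective_apply, map_add, map_pow, substAlgHom_X]
    simp only [a, Matrix.cons_val]
    linear_combination X 0 ^ 3 * hv + X 1 ^ 3 * hw

theorem exists_algEquiv_apply_add_eq_self (h3 : IsUnit (3 : R)) {g : MvPowerSeries (Fin 3) R}
    (hg : g ∈ Ideal.span {X 0 ^ 3 * X 1 ^ 2, X 0 ^ 2 * X 1 ^ 3}) :
    ∃ φ : MvPowerSeries (Fin 3) R ≃ₐ[R] MvPowerSeries (Fin 3) R,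
      φ (X 2 ^ 2 + X 0 ^ 3 + X 1 ^ 3 + g) = X 2 ^ 2 + X 0 ^ 3 + X 1 ^ 3 := by
  obtain ⟨p, q, rfl⟩ := Ideal.mem_span_pair.mp hg
  obtain ⟨ψ, hψ⟩ := exists_algEquiv_apply_eq_self_add h3 p q
  exact ⟨ψ.symm, by rw [← hψ, AlgEquiv.symm_apply_apply]⟩

end MvPowerSeries

theorem Ideal.nonempty_algEquiv_quotient_span_singleton {R A B : Type*} [CommRing R] [CommRing A]
    [CommRing B] [Algebra R A] [Algebra R B] (φ : A ≃ₐ[R] B) {x : A} {y : B} (h : φ x = y) :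
    Nonempty ((A ⧸ Ideal.span {x}) ≃ₐ[R] (B ⧸ Ideal.span {y})) :=
  ⟨Ideal.quotientEquivAlg _ _ φ (by rw [Ideal.map_span, Set.image_singleton, ← h]; rfl)⟩

open MvPowerSeries

/-- In `R[[a,b,c]]` (with `R` an algebra over a field of characteristic 2), for
`f = c² + a³ + b³` and any `g` in the ideal `(a³b², a²b³)` there is an `R`-algebra
automorphism `φ` with `φ(f + g) = f`; in particular
`R[[a,b,c]]/(c² + a³ + b³ + s²a³b² + r²a²b³) ≅ R[[a,b,c]]/(c² + a³ + b³)` for all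
`r, s ∈ R`. -/
theorem stmt16 (k : Type*) [Field k] [CharP k 2]
    (R : Type*) [CommRing R] [Algebra k R] (r s : R)
    (g : MvPowerSeries (Fin 3) R)
    (hg : g ∈ Ideal.span {(X 0 : MvPowerSeries (Fin 3) R) ^ 3 * (X 1) ^ 2,
      (X 0) ^ 2 * (X 1) ^ 3}) :
    (∃ φ : MvPowerSeries (Fin 3) R ≃ₐ[R] MvPowerSeries (Fin 3) R,
      φ (((X 2 : MvPowerSeries (Fin 3) R) ^ 2 + (X 0) ^ 3 + (X 1) ^ 3) + g)
        = (X 2) ^ 2 + (X 0) ^ 3 + (X 1) ^ 3) ∧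
    Nonempty ((MvPowerSeries (Fin 3) R ⧸ Ideal.span
        {(X 2 : MvPowerSeries (Fin 3) R) ^ 2 + (X 0) ^ 3 + (X 1) ^ 3
          + (C (σ := Fin 3) (R := R)) (s ^ 2) * (X 0) ^ 3 * (X 1) ^ 2
          + (C (σ := Fin 3) (R := R)) (r ^ 2) * (X 0) ^ 2 * (X 1) ^ 3}) ≃ₐ[R]
      (MvPowerSeries (Fin 3) R ⧸ Ideal.span
        {(X 2 : MvPowerSeries (Fin 3) R) ^ 2 + (X 0) ^ 3 + (X 1) ^ 3})) := by
  have h3 : IsUnit (3 : R) := by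
    have h2 : (2 : R) = 0 := by rw [← map_ofNat (algebraMap k R) 2, CharTwo.two_eq_zero, map_zero]
    rw [show (3 : R) = 2 + 1 by norm_num, h2, zero_add]
    exact isUnit_one
  refine ⟨exists_algEquiv_apply_add_eq_self h3 hg, ?_⟩
  obtain ⟨φ, hφ⟩ := exists_algEquiv_apply_add_eq_self h3
    (g := C (s ^ 2) * X 0 ^ 3 * X 1 ^ 2 + C (r ^ 2) * X 0 ^ 2 * X 1 ^ 3)
    (Ideal.mem_span_pair.mpr ⟨C (s ^ 2), C (r ^ 2), by ring⟩)
  rw [add_assoc (X 2 ^ 2 + X 0 ^ 3 + X 1 ^ 3 : MvPowerSeries (Fin 3) R)]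
  exact Ideal.nonempty_algEquiv_quotient_span_singleton φ hφ
end
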